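/- Frobenius reciprocity holds between ind and res: for all basis elements, \langle ind(a_\alpha \otimes a_\beta), a_\lambda \rangle = \langle a_\alpha \otimes a_\beta, res(a_\lambda) \rangle, where \langle,\rangle is the pairing making the a_\lambda an orthonormal basis of K (and the induced tensor-product pairing on K \otimes K). -/

import Mathlib

/-- A weight: a word in the two-letter alphabet `{•, ∘}` (encoded as `Bool`,
with `true = •` and `false = ∘`). -/
abbrev Word : Type := List Bool

/-- The Grothendieck group `K`: the free `ℤ`-module on the set of weights,
with basis `a_λ = Finsupp.single λ 1`. -/
abbrev K : Type := Word →₀ ℤ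

/-- The model of `K ⊗ K`: the free `ℤ`-module on pairs of weights, with
`a_λ ⊗ a_μ = Finsupp.single (λ, μ) 1`. -/
abbrev K2 : Type := Word × Word →₀ ℤ

/-- `res` on a basis element: `res(a_λ) = ∑_{i=0}^n a_{λ[1,i]} ⊗ a_{λ(i,n]}
+ ∑_{i=1}^n a_{λ[1,i)} ⊗ a_{λ(i,n]}` where `n = ℓ(λ)`. -/
noncomputable def resWord (w : Word) : K2 :=
  (∑ i ∈ Finset.range (w.length + 1), Finsupp.single (w.take i, w.drop i) 1)
    + ∑ i ∈ Finset.range w.length, Finsupp.single (w.take i, w.drop (i + 1)) 1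

/-- The restriction comultiplication `res : K → K ⊗ K`. -/
noncomputable def res : K →ₗ[ℤ] K2 :=
  Finsupp.lift K2 ℤ Word resWord

/-- `ind` on basis elements: `ind(a_α ⊗ a_β) = a_{α•β} + a_{α∘β} + a_{αβ}`. -/
noncomputable def indWord (α β : Word) : K :=
  Finsupp.single (α ++ (true :: β)) 1 + Finsupp.single (α ++ (false :: β)) 1
    + Finsupp.single (α ++ β) 1

/-- The induction product `ind : K ⊗ K → K`. -/
noncomputable def ind : K2 →ₗ[ℤ] K :=
  Finsupp.lift K ℤ (Word × Word) fun p => indWord p.1 p.2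

/-- The elementary tensor `x ⊗ y ∈ K ⊗ K` of `x, y ∈ K`. -/
noncomputable def tens (x y : K) : K2 :=
  x.sum fun a ca => y.sum fun b cb => Finsupp.single (a, b) (ca * cb)

/-- The pairing on `K` making the basis `a_λ` orthonormal. -/
noncomputable def pairK (x y : K) : ℤ := x.sum fun w c => c * y w

/-- The induced tensor-product pairing on `K ⊗ K`, making the `a_λ ⊗ a_μ` orthonormal. -/
noncomputable def pairK2 (x y : K2) : ℤ := x.sum fun w c => c * y w

/-!
Both sides are coefficients: of `a_λ` in `ind(a_α ⊗ a_β)` and of `a_α ⊗ a_β` in `res(a_λ)`.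
A cut `(λ[1,i], λ(i,n])` or a deletion `(λ[1,i), λ(i,n])` of `λ` equals `(α, β)` only at
`i = ℓ(α)`, and then exactly when `λ = αβ`, respectively `λ = α•β` or `λ = α∘β`.
-/

namespace List

variable {γ : Type*}

theorem take_drop_eq_iff {l α β : List γ} {i : ℕ} (hi : i ≤ l.length) :
    (l.take i, l.drop i) = (α, β) ↔ i = α.length ∧ l = α ++ β := by
  constructor
  · rintro ⟨rfl, rfl⟩
    exact ⟨by simp [hi], (take_append_drop i l).symm⟩
  · rintro ⟨rfl, rfl⟩
    simp

theorem take_drop_succ_eq_iff {l α β : List γ} {i : ℕ} (hi : i < l.length) :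
    (l.take i, l.drop (i + 1)) = (α, β) ↔ i = α.length ∧ ∃ b, l = α ++ b :: β := by
  constructor
  · rintro ⟨rfl, rfl⟩
    refine ⟨by simp [hi.le], l[i], ?_⟩
    rw [← drop_eq_getElem_cons hi, take_append_drop]
  · rintro ⟨rfl, b, rfl⟩
    simp

end List

section Coefficients

variable {γ R : Type*} [DecidableEq γ] [AddCommMonoidWithOne R]

theorem sum_single_take_drop_apply (l α β : List γ) :
    (∑ i ∈ Finset.range (l.length + 1), Finsupp.single (l.take i, l.drop i) (1 : R)) (α, β)
      = if l = α ++ β then 1 else 0 := by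
  rw [Finsupp.finsetSum_apply]
  have hcut : ∀ i ∈ Finset.range (l.length + 1),
      Finsupp.single (l.take i, l.drop i) (1 : R) (α, β)
        = if i = α.length ∧ l = α ++ β then 1 else 0 := fun i hi => by
    rw [Finsupp.single_apply]
    exact if_congr (List.take_drop_eq_iff (Nat.lt_succ_iff.mp (Finset.mem_range.mp hi))) rfl rfl
  rw [Finset.sum_congr rfl hcut]
  by_cases hl : l = α ++ β
  · subst hl
    simp
  · simp [hl]

open scoped Classical in
theorem sum_single_take_drop_succ_apply (l α β : List γ) :
    (∑ i ∈ Finset.range l.length, Finsupp.single (l.take i, l.drop (i + 1)) (1 : R)) (α, β)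
      = if ∃ b, l = α ++ b :: β then 1 else 0 := by
  rw [Finsupp.finsetSum_apply]
  have hdel : ∀ i ∈ Finset.range l.length,
      Finsupp.single (l.take i, l.drop (i + 1)) (1 : R) (α, β)
        = if i = α.length ∧ ∃ b, l = α ++ b :: β then 1 else 0 := fun i hi => by
    rw [Finsupp.single_apply]
    exact if_congr (List.take_drop_succ_eq_iff (Finset.mem_range.mp hi)) rfl rfl
  rw [Finset.sum_congr rfl hdel]
  by_cases hl : ∃ b, l = α ++ b :: β
  · obtain ⟨b, rfl⟩ := hl
    simp
  · simp [hl]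

end Coefficients

theorem ite_or_eq_add_of_not_and {R : Type*} [AddMonoidWithOne R] {p q : Prop} [Decidable p]
    [Decidable q] (hpq : ¬(p ∧ q)) :
    (if p ∨ q then (1 : R) else 0) = (if p then 1 else 0) + if q then 1 else 0 := by
  by_cases hp : p <;> by_cases hq : q <;> simp_all

theorem indWord_apply_eq_resWord_apply (α β lam : Word) :
    indWord α β lam = resWord lam (α, β) := by
  have hexcl : ¬(lam = α ++ true :: β ∧ lam = α ++ false :: β) := fun ⟨ht, hf⟩ => by
    simp [ht] at hf
  rw [resWord, Finsupp.add_apply, sum_single_take_drop_apply, sum_single_take_drop_succ_apply]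
  simp only [Bool.exists_bool, or_comm (a := lam = α ++ false :: β)]
  rw [ite_or_eq_add_of_not_and hexcl, indWord]
  simp only [Finsupp.add_apply, Finsupp.single_apply, eq_comm (a := lam)]
  ring

theorem ind_single (α β : Word) : ind (Finsupp.single (α, β) 1) = indWord α β := by
  simp [ind]

theorem res_single (lam : Word) : res (Finsupp.single lam 1) = resWord lam := by
  simp [res]

theorem pairK_single_right (x : K) (lam : Word) : pairK x (Finsupp.single lam 1) = x lam := by
  simp only [pairK, Finsupp.single_apply, mul_ite, mul_one, mul_zero, Finsupp.sum_ite_self_eq]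

theorem pairK2_single_left (p : Word × Word) (y : K2) : pairK2 (Finsupp.single p 1) y = y p := by
  simp [pairK2]

/-- Frobenius reciprocity between `ind` and `res`:
`⟨ind(a_α ⊗ a_β), a_λ⟩ = ⟨a_α ⊗ a_β, res(a_λ)⟩`. -/
theorem frobenius_reciprocity : ∀ α β lam : Word,
    pairK (ind (Finsupp.single (α, β) 1)) (Finsupp.single lam 1)
      = pairK2 (Finsupp.single (α, β) 1) (res (Finsupp.single lam 1)) := by
  intro α β lam
  rw [ind_single, res_single, pairK_single_right, pairK2_single_left,
    indWord_apply_eq_resWord_apply]
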